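/- arXiv:2303.18208 — 2 statements merged into one kernel-verified Lean document; each statement's English description precedes it below -/
import Mathlib

section
/- Let A be an algebraic curvature tensor on ℝⁿ that is Einstein with Einstein constant k and satisfies δ ≤ R̄ ≤ Δ. If h = (h_{ij}) is a nonzero symmetric array with ∑_i h_{ii} = 0 and r ∈ ℝ satisfies ∑_{k,l} A_{kilj} h_{kl} = r h_{ij} for all i, j, then r lies in the intersection of the intervals [−k + nδ, k − (n−2)δ] and [k − (n−2)Δ, −k + nΔ]. -/
/-!
Diagonalize `h` in an orthonormal eigenbasis `v` with eigenvalues `λ` (so `∑ λ = 0`, `λ ≠ 0`) and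
put `K a b = R(v a, v b, v b, v a)`: the sectional curvature of the plane `⟨v a, v b⟩` for `a ≠ b`,
and `0` for `a = b`. The Einstein condition gives `∑ a, K a b = k`, and contracting the eigenvalue
equation with `v a ⊗ v a` gives `∑ m, K m a * λ m = -r λ a`, hence
`∑ m, K m a * (λ b - λ m) = k λ b + r λ a`.
Taking `a = b` to be the index of the largest eigenvalue, all weights `λ a - λ m` are nonnegative
and add up to `n λ a > 0`, so `n δ ≤ k + r ≤ n Δ`. Subtracting the identity for
`(a, b) = (max, min)` from the one for `(min, max)` leaves a sum whose terms `m = max, min` vanish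
and whose other `n - 2` terms carry nonnegative weights adding up to `λ max - λ min`, whence
`(n - 2) δ ≤ k - r ≤ (n - 2) Δ`.
-/

open scoped BigOperators InnerProductSpace

open Finset

theorem Finset.sum_comm_pairs {ι β : Type*} [AddCommMonoid β] [Fintype ι] (f : ι → ι → ι → ι → β) :
    ∑ i, ∑ p, ∑ j, ∑ q, f i p j q = ∑ j, ∑ q, ∑ i, ∑ p, f i p j q :=
  (sum_congr rfl fun _ _ => sum_comm.trans (sum_congr rfl fun _ _ => sum_comm)).trans <|
    sum_comm.trans (sum_congr rfl fun _ _ => sum_comm)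

theorem OrthonormalBasis.sum_apply_mul_apply {κ ι : Type*} [Fintype κ] [Fintype ι] [DecidableEq ι]
    (b : OrthonormalBasis κ ℝ (EuclideanSpace ℝ ι)) (i j : ι) :
    ∑ a, b a i * b a j = if i = j then 1 else 0 := by
  have := b.sum_inner_mul_inner (EuclideanSpace.single i 1) (EuclideanSpace.single j 1)
  simpa [EuclideanSpace.inner_single_left, EuclideanSpace.inner_single_right, Pi.single_apply,
    eq_comm] using this

theorem OrthonormalBasis.sum_sum_sum_mul_eq_trace {κ ι : Type*} [Fintype κ] [Fintype ι]
    [DecidableEq ι] (b : OrthonormalBasis κ ℝ (EuclideanSpace ℝ ι)) (T : ι → ι → ℝ) :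
    ∑ a, ∑ i, ∑ j, T i j * b a i * b a j = ∑ i, T i i := by
  simp only [mul_assoc]
  rw [sum_comm]
  refine (sum_congr rfl fun i _ => sum_comm).trans ?_
  simp [← mul_sum, b.sum_apply_mul_apply]

theorem Matrix.IsHermitian.apply_eq_sum_eigenvalues_mul {ι : Type*} [Fintype ι] [DecidableEq ι]
    {h : Matrix ι ι ℝ} (hh : h.IsHermitian) (i j : ι) :
    h i j = ∑ m, hh.eigenvalues m * hh.eigenvectorBasis m i * hh.eigenvectorBasis m j := by
  conv_lhs => rw [hh.spectral_theorem]
  simp [Matrix.mul_apply, Matrix.diagonal, mul_comm]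

theorem Matrix.IsHermitian.sum_sum_mul_eq_sum_eigenvalues_mul {ι : Type*} [Fintype ι]
    [DecidableEq ι] {h : Matrix ι ι ℝ} (hh : h.IsHermitian) (M : ι → ι → ℝ) :
    ∑ i, ∑ j, M i j * h i j = ∑ m, hh.eigenvalues m *
      ∑ i, ∑ j, M i j * hh.eigenvectorBasis m i * hh.eigenvectorBasis m j := by
  simp only [hh.apply_eq_sum_eigenvalues_mul, mul_sum]
  refine (sum_congr rfl fun i _ => sum_comm).trans (sum_comm.trans ?_)
  exact sum_congr rfl fun m _ => sum_congr rfl fun i _ => sum_congr rfl fun j _ => by ring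

theorem Matrix.IsHermitian.sum_sum_mul_eigenvectorBasis {ι : Type*} [Fintype ι] [DecidableEq ι]
    {h : Matrix ι ι ℝ} (hh : h.IsHermitian) (a : ι) :
    ∑ i, ∑ j, h i j * hh.eigenvectorBasis a i * hh.eigenvectorBasis a j = hh.eigenvalues a := by
  rw [hh.eigenvalues_eq]
  simp [dotProduct, Matrix.mulVec, mul_sum]
  exact sum_congr rfl fun i _ => sum_congr rfl fun j _ => by ring

section WeightedSums

variable {ι : Type*} [Fintype ι] {K : ι → ι → ℝ} {lam : ι → ℝ} {k r δ Δ : ℝ}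

theorem sum_mul_sub_eq (hcol : ∀ b, ∑ a, K a b = k)
    (heig : ∀ a, ∑ m, K m a * lam m = -(r * lam a)) (a b : ι) :
    ∑ m, K m a * (lam b - lam m) = k * lam b + r * lam a := by
  simp only [mul_sub, sum_sub_distrib, ← sum_mul, hcol, heig, sub_neg_eq_add]

theorem neg_add_card_mul_le (hlow : ∀ a b, a ≠ b → δ ≤ K a b)
    (hcol : ∀ b, ∑ a, K a b = k) (heig : ∀ a, ∑ m, K m a * lam m = -(r * lam a))
    {i : ι} (hmax : ∀ m, lam m ≤ lam i) (hpos : 0 < lam i)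
    (hsum : ∑ m, lam m = 0) :
    -k + Fintype.card ι * δ ≤ r := by
  have key : δ * (Fintype.card ι * lam i) ≤ (k + r) * lam i := by
    calc δ * (Fintype.card ι * lam i) = ∑ m, δ * (lam i - lam m) := by
          simp [← mul_sum, sum_sub_distrib, hsum]
      _ ≤ ∑ m, K m i * (lam i - lam m) := by
          refine sum_le_sum fun m _ => ?_
          rcases eq_or_ne m i with rfl | hmi
          · simp
          · exact mul_le_mul_of_nonneg_right (hlow m i hmi) (sub_nonneg.2 (hmax m))
      _ = (k + r) * lam i := by rw [sum_mul_sub_eq hcol heig]; ring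
  nlinarith

theorem le_sub_card_sub_two_mul (hdiag : ∀ a, K a a = 0) (hlow : ∀ a b, a ≠ b → δ ≤ K a b)
    (hcol : ∀ b, ∑ a, K a b = k) (heig : ∀ a, ∑ m, K m a * lam m = -(r * lam a))
    {i j : ι} (hmax : ∀ m, lam m ≤ lam i) (hmin : ∀ m, lam j ≤ lam m) (hlt : lam j < lam i) :
    r ≤ k - (Fintype.card ι - 2) * δ := by
  classical
  have hij : i ≠ j := fun h => hlt.ne' (congrArg lam h)
  set c := δ * (lam i - lam j)
  -- The terms `m = i` and `m = j` vanish; every other one is at least `c`, because its two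
  -- weights are nonnegative and add up to `lam i - lam j`.
  have hterm : ∀ m, c - (if m = i then c else 0) - (if m = j then c else 0)
      ≤ K m i * (lam m - lam j) + K m j * (lam i - lam m) := by
    intro m
    rcases eq_or_ne m i with rfl | hmi
    · simp [hij, hdiag]
    rcases eq_or_ne m j with rfl | hmj
    · simp [hmi, hdiag]
    have h1 := mul_le_mul_of_nonneg_right (hlow m i hmi) (sub_nonneg.2 (hmin m))
    have h2 := mul_le_mul_of_nonneg_right (hlow m j hmj) (sub_nonneg.2 (hmax m))
    simp only [hmi, hmj, if_false, sub_zero, c]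
    linarith
  have key : (Fintype.card ι - 2) * c ≤ (k - r) * (lam i - lam j) := by
    have hsum := sum_le_sum fun m (_ : m ∈ univ) => hterm m
    simp only [sum_sub_distrib, sum_ite_eq', mem_univ, if_true, sum_const, card_univ,
      nsmul_eq_mul] at hsum
    have e1 := sum_mul_sub_eq hcol heig i j
    have e2 := sum_mul_sub_eq hcol heig j i
    simp only [mul_sub, sum_sub_distrib, sum_add_distrib] at e1 e2 hsum ⊢
    linarith
  have : 0 < lam i - lam j := sub_pos.2 hlt
  nlinarith

theorem exists_max_pos_min_neg (hsum : ∑ m, lam m = 0) (hne : lam ≠ 0) :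
    ∃ i j, (∀ m, lam m ≤ lam i) ∧ (∀ m, lam j ≤ lam m) ∧ lam j < 0 ∧ 0 < lam i := by
  obtain ⟨m₀, hm₀⟩ := Function.ne_iff.1 hne
  have : Nonempty ι := ⟨m₀⟩
  obtain ⟨i, hi⟩ := Finite.exists_max lam
  obtain ⟨j, hj⟩ := Finite.exists_min lam
  refine ⟨i, j, hi, hj, ?_, ?_⟩
  · by_contra! h
    exact hm₀ ((sum_eq_zero_iff_of_nonneg fun m _ => h.trans (hj m)).1 hsum m₀ (mem_univ _))
  · by_contra! h
    exact hm₀ ((sum_eq_zero_iff_of_nonpos fun m _ => (hi m).trans h).1 hsum m₀ (mem_univ _))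

theorem eigenvalue_bounds_of_lower (hdiag : ∀ a, K a a = 0) (hlow : ∀ a b, a ≠ b → δ ≤ K a b)
    (hcol : ∀ b, ∑ a, K a b = k) (heig : ∀ a, ∑ m, K m a * lam m = -(r * lam a))
    (hsum : ∑ m, lam m = 0) (hne : lam ≠ 0) :
    -k + Fintype.card ι * δ ≤ r ∧ r ≤ k - (Fintype.card ι - 2) * δ := by
  obtain ⟨i, j, hmax, hmin, hneg, hpos⟩ := exists_max_pos_min_neg hsum hne
  exact ⟨neg_add_card_mul_le hlow hcol heig hmax hpos hsum,
    le_sub_card_sub_two_mul hdiag hlow hcol heig hmax hmin (hneg.trans hpos)⟩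

-- The upper bounds are the lower bounds for `-K`, whose constants are `-k`, `-r` and `-Δ`.
theorem eigenvalue_bounds (hdiag : ∀ a, K a a = 0)
    (hbound : ∀ a b, a ≠ b → δ ≤ K a b ∧ K a b ≤ Δ)
    (hcol : ∀ b, ∑ a, K a b = k) (heig : ∀ a, ∑ m, K m a * lam m = -(r * lam a))
    (hsum : ∑ m, lam m = 0) (hne : lam ≠ 0) :
    (-k + Fintype.card ι * δ ≤ r ∧ r ≤ k - (Fintype.card ι - 2) * δ) ∧
      (k - (Fintype.card ι - 2) * Δ ≤ r ∧ r ≤ -k + Fintype.card ι * Δ) := by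
  have lower := eigenvalue_bounds_of_lower hdiag (fun a b hab => (hbound a b hab).1) hcol heig
    hsum hne
  have upper := eigenvalue_bounds_of_lower (K := -K) (k := -k) (r := -r) (δ := -Δ)
    (by simp [hdiag]) (fun a b hab => by simpa using (hbound a b hab).2)
    (by simpa using hcol) (by simp [heig]) hsum hne
  constructor <;> constructor <;> linarith [lower.1, lower.2, upper.1, upper.2]

end WeightedSums

section CurvatureForm

variable {ι : Type*} [Fintype ι] {A : ι → ι → ι → ι → ℝ}

def curvatureForm (A : ι → ι → ι → ι → ℝ) (X Y Z W : ι → ℝ) : ℝ :=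
  ∑ i, ∑ j, ∑ p, ∑ q, A i j p q * X i * Y j * Z p * W q

theorem curvatureForm_self_left (hA1 : ∀ i j p q, A i j p q = -A j i p q) (X Z W : ι → ℝ) :
    curvatureForm A X X Z W = 0 := by
  have h : -curvatureForm A X X Z W = curvatureForm A X X Z W := by
    simp only [curvatureForm, ← sum_neg_distrib]
    rw [sum_comm]
    exact sum_congr rfl fun j _ => sum_congr rfl fun i _ => sum_congr rfl fun p _ =>
      sum_congr rfl fun q _ => by rw [hA1]; ring
  linarith

theorem curvatureForm_swap_right (hA2 : ∀ i j p q, A i j p q = -A i j q p) (X Y Z W : ι → ℝ) :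
    curvatureForm A X Y Z W = -curvatureForm A X Y W Z := by
  simp only [curvatureForm, ← sum_neg_distrib]
  exact sum_congr rfl fun i _ => sum_congr rfl fun j _ => sum_comm.trans <|
    sum_congr rfl fun q _ => sum_congr rfl fun p _ => by rw [hA2]; ring

theorem curvatureForm_eq_sum_outer (X Y Z W : ι → ℝ) :
    curvatureForm A X Y Z W = ∑ i, ∑ q, (∑ j, ∑ p, A i j p q * Y j * Z p) * X i * W q := by
  simp only [curvatureForm, sum_mul]
  refine sum_congr rfl fun i _ => ((sum_congr rfl fun j _ => sum_comm).trans sum_comm).trans ?_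
  exact sum_congr rfl fun q _ => sum_congr rfl fun j _ => sum_congr rfl fun p _ => by ring

theorem curvatureForm_eq_sum_mixed (X Y Z W : ι → ℝ) :
    curvatureForm A X Y Z W = ∑ i, ∑ p, (∑ j, ∑ q, A i j p q * Y j * W q) * X i * Z p := by
  simp only [curvatureForm, sum_mul]
  refine sum_congr rfl fun i _ => sum_comm.trans ?_
  exact sum_congr rfl fun p _ => sum_congr rfl fun j _ => sum_congr rfl fun q _ => by ring

theorem sum_curvatureForm_orthonormalBasis [DecidableEq ι] {κ : Type*} [Fintype κ] {k : ℝ}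
    (hEinstein : ∀ i j, ∑ m, A m i j m = k * if i = j then 1 else 0)
    (b : OrthonormalBasis κ ℝ (EuclideanSpace ℝ ι)) (Y Z : EuclideanSpace ℝ ι) :
    ∑ a, curvatureForm A (b a) Y Z (b a) = k * ⟪Y, Z⟫_ℝ := by
  simp only [curvatureForm_eq_sum_outer, b.sum_sum_sum_mul_eq_trace]
  rw [sum_comm]
  refine (sum_congr rfl fun j _ => sum_comm).trans ?_
  simp [← sum_mul, hEinstein, PiLp.inner_apply, mul_comm, mul_sum, mul_assoc]

theorem sum_curvatureForm_mul_eigenvalues [DecidableEq ι] {h : Matrix ι ι ℝ} {r : ℝ}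
    (hA2 : ∀ i j p q, A i j p q = -A i j q p) (hh : h.IsHermitian)
    (heig : ∀ i j, ∑ p, ∑ q, A p i q j * h p q = r * h i j) (a : ι) :
    ∑ m, curvatureForm A (hh.eigenvectorBasis m) (hh.eigenvectorBasis a)
      (hh.eigenvectorBasis a) (hh.eigenvectorBasis m) * hh.eigenvalues m =
      -(r * hh.eigenvalues a) := by
  set v := hh.eigenvectorBasis with hv
  calc _ = -∑ m, hh.eigenvalues m *
          ∑ i, ∑ p, (∑ j, ∑ q, A i j p q * v a j * v a q) * v m i * v m p := by
        rw [← sum_neg_distrib]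
        refine sum_congr rfl fun m _ => ?_
        rw [curvatureForm_swap_right hA2, curvatureForm_eq_sum_mixed]
        ring
    _ = -∑ i, ∑ p, (∑ j, ∑ q, A i j p q * v a j * v a q) * h i p := by
        rw [hh.sum_sum_mul_eq_sum_eigenvalues_mul]
    _ = -∑ j, ∑ q, (∑ i, ∑ p, A i j p q * h i p) * v a j * v a q := by
        simp only [sum_mul]
        rw [sum_comm_pairs]
        exact congrArg _ <| sum_congr rfl fun j _ => sum_congr rfl fun q _ =>
          sum_congr rfl fun i _ => sum_congr rfl fun p _ => by ring
    _ = -(r * hh.eigenvalues a) := by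
        rw [← hh.sum_sum_mul_eigenvectorBasis a, ← hv]
        simp only [heig, mul_sum, mul_assoc]

end CurvatureForm

theorem Rcirc_eigenvalue_estimate_einstein_general
    (n : ℕ)
    (A : Fin n → Fin n → Fin n → Fin n → ℝ) (k δ Δ : ℝ)
    (hA1 : ∀ i j p q, A i j p q = - A j i p q)
    (hA2 : ∀ i j p q, A i j p q = - A i j q p)
    (hEinstein : ∀ i j, ∑ m, A m i j m = k * (if i = j then (1 : ℝ) else 0))
    (hsec : ∀ X Y : EuclideanSpace ℝ (Fin n),
      ‖X‖ ^ 2 * ‖Y‖ ^ 2 - ⟪X, Y⟫_ℝ ^ 2 = 1 →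
      δ ≤ (∑ i, ∑ j, ∑ p, ∑ q, A i j p q * X i * Y j * Y p * X q) ∧
      (∑ i, ∑ j, ∑ p, ∑ q, A i j p q * X i * Y j * Y p * X q) ≤ Δ)
    (h : Fin n → Fin n → ℝ) (r : ℝ)
    (hsymm : ∀ i j, h i j = h j i)
    (htr : ∑ i, h i i = 0)
    (h_ne : h ≠ 0)
    (heig : ∀ i j, ∑ p, ∑ q, A p i q j * h p q = r * h i j) :
    (-k + (n : ℝ) * δ ≤ r ∧ r ≤ k - ((n : ℝ) - 2) * δ) ∧
    (k - ((n : ℝ) - 2) * Δ ≤ r ∧ r ≤ -k + (n : ℝ) * Δ) := by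
  classical
  have hh : Matrix.IsHermitian h := Matrix.IsHermitian.ext fun i j => by
    simp [hsymm i j]
  set v := hh.eigenvectorBasis
  have hsum : ∑ m, hh.eigenvalues m = 0 := by
    simpa [Matrix.trace, Matrix.diag, htr] using hh.trace_eq_sum_eigenvalues.symm
  have horth : ∀ a b, a ≠ b → ‖v a‖ ^ 2 * ‖v b‖ ^ 2 - ⟪v a, v b⟫_ℝ ^ 2 = 1 := fun a b hab => by
    rw [v.orthonormal.1 a, v.orthonormal.1 b, v.orthonormal.2 hab]
    norm_num
  have bounds := eigenvalue_bounds (K := fun a b => curvatureForm A (v a) (v b) (v b) (v a))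
    (fun a => curvatureForm_self_left hA1 _ _ _)
    (fun a b hab => hsec (v a) (v b) (horth a b hab))
    (fun b => by
      simpa [v.orthonormal.1 b] using sum_curvatureForm_orthonormalBasis hEinstein v (v b) (v b))
    (sum_curvatureForm_mul_eigenvalues hA2 hh heig) hsum
    (fun h0 => h_ne (hh.eigenvalues_eq_zero_iff.1 h0))
  simpa using bounds

theorem Rcirc_eigenvalue_estimate_einstein
    (n : ℕ)
    (A : Fin n → Fin n → Fin n → Fin n → ℝ) (k δ Δ : ℝ)
    (hA1 : ∀ i j p q, A i j p q = - A j i p q)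
    (hA2 : ∀ i j p q, A i j p q = - A i j q p)
    (hA3 : ∀ i j p q, A i j p q = A p q i j)
    (hBianchi : ∀ i j p q, A i j p q + A p i j q + A j p i q = 0)
    (hEinstein : ∀ i j, ∑ m, A m i j m = k * (if i = j then (1 : ℝ) else 0))
    (hsec : ∀ X Y : EuclideanSpace ℝ (Fin n),
      ‖X‖ ^ 2 * ‖Y‖ ^ 2 - ⟪X, Y⟫_ℝ ^ 2 = 1 →
      δ ≤ (∑ i, ∑ j, ∑ p, ∑ q, A i j p q * X i * Y j * Y p * X q) ∧
      (∑ i, ∑ j, ∑ p, ∑ q, A i j p q * X i * Y j * Y p * X q) ≤ Δ)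
    (h : Fin n → Fin n → ℝ) (r : ℝ)
    (hsymm : ∀ i j, h i j = h j i)
    (htr : ∑ i, h i i = 0)
    (h_ne : h ≠ 0)
    (heig : ∀ i j, ∑ p, ∑ q, A p i q j * h p q = r * h i j) :
    (-k + (n : ℝ) * δ ≤ r ∧ r ≤ k - ((n : ℝ) - 2) * δ) ∧
    (k - ((n : ℝ) - 2) * Δ ≤ r ∧ r ≤ -k + (n : ℝ) * Δ) :=
  Rcirc_eigenvalue_estimate_einstein_general n A k δ Δ hA1 hA2 hEinstein hsec h r hsymm htr h_ne
    heig
end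

section
/- On ℝ⁶, let (ω, ψ⁺, ψ⁻) satisfy the SU(3) contraction identities. Then: (a) g ⋄ ω = 2ω, i.e. ∑_p (δ_{ip}ω_{pj} + δ_{jp}ω_{ip}) = 2ω_{ij}; (b) for every X ∈ ℝ⁶, the 2-form β with β_{ij} = ∑_u X_u ψ⁺_{uij} satisfies (β ⋄ ω)_{ij} := ∑_p (β_{ip}ω_{pj} + β_{jp}ω_{ip}) = −2 ∑_u (JX)_u ψ⁺_{uij}, where (JX)_p = ∑_a X_a ω_{ap}; (c) for every symmetric h with ∑_i h_{ii} = 0 and commuting with ω (∑_p h_{ip}ω_{pj} = ∑_p ω_{ip}h_{pj}), the 2-form β = h ⋄ ω satisfies ∑_{i,j} β_{ij}ω_{ij} = 0 and ∑_{i,j} β_{ij}ψ⁺_{ijk} = 0 for all k (so h ⋄ ω lies in Ω²₈). -/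
open scoped BigOperators

/-- Kronecker delta on `Fin 6`. -/
noncomputable def kd6 (i j : Fin 6) : ℝ := if i = j then 1 else 0

/-!
Two contractions drive everything: contracting ψ⁺ with ω in any slot gives ±ψ⁻, and
`∑ₖ ω_{ik} ω_{jk} = δ_{ij}`. Against a skew 2-tensor `T`, the two halves of `h ⋄ ω` contribute
equally, so `⟨h ⋄ ω, T⟩ = 2 ∑ h_{ip} ω_{pj} T_{ij}`. For `T = ω` this is `2 tr h`; for
`T = ψ⁺_{··k}` it is `2 ∑ h_{ip} ψ⁻_{ikp}`, which vanishes because `h` is symmetric and ψ⁻ is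
alternating. Part (b) follows slot by slot from `ψ⁺_u ⋄ ω = 2 ψ⁻_u` and `ω · ψ⁺ = -ψ⁻`.
-/

open Finset

theorem apply_cyclic_of_alternating {ι R : Type*} [InvolutiveNeg R] {T : ι → ι → ι → R}
    (h₁ : ∀ i j k, T i j k = -T j i k) (h₂ : ∀ i j k, T i j k = -T i k j) (i j k : ι) :
    T i j k = T j k i := by
  rw [h₁, h₂, neg_neg]

section SU3Contractions

variable {ι R : Type*} [Fintype ι] [CommRing R]

def diamond (h ω : ι → ι → R) (i j : ι) : R :=
  ∑ p, (h i p * ω p j + h j p * ω i p)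

theorem diamond_kronecker [DecidableEq ι] (ω : ι → ι → R) (i j : ι) :
    diamond (fun i j => if i = j then 1 else 0) ω i j = 2 * ω i j := by
  simp [diamond, ite_mul, sum_add_distrib, two_mul]

theorem diamond_sum_smul (X : ι → R) (T : ι → ι → ι → R) (ω : ι → ι → R) (i j : ι) :
    diamond (fun i j => ∑ u, X u * T u i j) ω i j = ∑ u, X u * diamond (T u) ω i j := by
  simp only [diamond, sum_mul, mul_sum, ← sum_add_distrib, mul_add, mul_assoc]
  exact sum_comm

theorem sum_sum_mul_sum_mul (X : ι → R) (ω : ι → ι → R) (T : ι → ι → ι → R) (i j : ι) :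
    ∑ u, (∑ a, X a * ω a u) * T u i j = ∑ a, X a * ∑ u, ω a u * T u i j := by
  simp only [sum_mul, mul_sum, mul_assoc]
  exact sum_comm

variable {ω : ι → ι → R} {ψ ψm : ι → ι → ι → R}

theorem diamond_psi_slice (hω : ∀ i j, ω i j = -ω j i) (hψm₂ : ∀ i j k, ψm i j k = -ψm i k j)
    (hψω : ∀ i j a, ∑ k, ψ i j k * ω a k = -ψm i j a) (u i j : ι) :
    diamond (ψ u) ω i j = 2 * ψm u i j := by
  have h₁ : ∑ p, ψ u i p * ω p j = ψm u i j := by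
    simp_rw [hω _ j, mul_neg, sum_neg_distrib, hψω, neg_neg]
  have h₂ : ∑ p, ψ u j p * ω i p = ψm u i j := by
    rw [hψω, hψm₂, neg_neg]
  rw [diamond, sum_add_distrib, h₁, h₂, two_mul]

theorem sum_omega_mul_psi (hψ₁ : ∀ i j k, ψ i j k = -ψ j i k) (hψ₂ : ∀ i j k, ψ i j k = -ψ i k j)
    (hψm₁ : ∀ i j k, ψm i j k = -ψm j i k) (hψm₂ : ∀ i j k, ψm i j k = -ψm i k j)
    (hψω : ∀ i j a, ∑ k, ψ i j k * ω a k = -ψm i j a) (a i j : ι) :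
    ∑ u, ω a u * ψ u i j = -ψm a i j := by
  simp_rw [apply_cyclic_of_alternating hψ₁ hψ₂ _ i j, mul_comm (ω a _), hψω,
    apply_cyclic_of_alternating hψm₁ hψm₂ a i j]

theorem diamond_contract_psi (X : ι → R) (hω : ∀ i j, ω i j = -ω j i)
    (hψ₁ : ∀ i j k, ψ i j k = -ψ j i k) (hψ₂ : ∀ i j k, ψ i j k = -ψ i k j)
    (hψm₁ : ∀ i j k, ψm i j k = -ψm j i k) (hψm₂ : ∀ i j k, ψm i j k = -ψm i k j)
    (hψω : ∀ i j a, ∑ k, ψ i j k * ω a k = -ψm i j a) (i j : ι) :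
    diamond (fun i j => ∑ u, X u * ψ u i j) ω i j = -2 * ∑ u, (∑ a, X a * ω a u) * ψ u i j := by
  rw [diamond_sum_smul, sum_sum_mul_sum_mul, mul_sum]
  refine sum_congr rfl fun u _ => ?_
  rw [diamond_psi_slice hω hψm₂ hψω, sum_omega_mul_psi hψ₁ hψ₂ hψm₁ hψm₂ hψω]
  ring

theorem sum_sum_mul_eq_zero_of_symm_of_skew [IsAddTorsionFree R] {h S : ι → ι → R}
    (hh : ∀ i j, h i j = h j i) (hS : ∀ i j, S i j = -S j i) :
    ∑ i, ∑ j, h i j * S i j = 0 := by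
  rw [← self_eq_neg, ← sum_neg_distrib, sum_comm]
  refine sum_congr rfl fun i _ => ?_
  rw [← sum_neg_distrib]
  refine sum_congr rfl fun j _ => ?_
  rw [hh, hS, mul_neg]

theorem sum_diamond_mul_skew (h : ι → ι → R) {T : ι → ι → R} (hω : ∀ i j, ω i j = -ω j i)
    (hT : ∀ i j, T i j = -T j i) :
    ∑ i, ∑ j, diamond h ω i j * T i j = 2 * ∑ i, ∑ p, h i p * ∑ j, ω p j * T i j := by
  have swap : ∑ i, ∑ j, (∑ p, h j p * ω i p) * T i j = ∑ i, ∑ j, (∑ p, h i p * ω p j) * T i j := by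
    rw [sum_comm]
    refine sum_congr rfl fun i _ => sum_congr rfl fun j _ => ?_
    simp_rw [hω j, hT j i, mul_neg, sum_neg_distrib, neg_mul, neg_neg]
  have rearrange : ∀ i, ∑ j, (∑ p, h i p * ω p j) * T i j = ∑ p, h i p * ∑ j, ω p j * T i j :=
    fun i => by simp only [sum_mul, mul_sum, mul_assoc]; exact sum_comm
  simp only [diamond, sum_add_distrib, add_mul]
  rw [swap, ← two_mul]
  simp only [rearrange]

theorem sum_diamond_mul_omega [DecidableEq ι] (h : ι → ι → R) (hω : ∀ i j, ω i j = -ω j i)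
    (hω_unit : ∀ i j, ∑ k, ω i k * ω j k = if i = j then 1 else 0) :
    ∑ i, ∑ j, diamond h ω i j * ω i j = 2 * ∑ i, h i i := by
  simp [sum_diamond_mul_skew h hω hω, hω_unit]

theorem sum_omega_mul_psi_left (hψ₂ : ∀ i j k, ψ i j k = -ψ i k j)
    (hψω : ∀ i j a, ∑ k, ψ i j k * ω a k = -ψm i j a) (i k p : ι) :
    ∑ j, ω p j * ψ i j k = ψm i k p := by
  simp_rw [hψ₂ i _ k, mul_neg, sum_neg_distrib, mul_comm (ω p _), hψω, neg_neg]

theorem sum_diamond_mul_psi [IsAddTorsionFree R] {h : ι → ι → R} (hh : ∀ i j, h i j = h j i)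
    (hω : ∀ i j, ω i j = -ω j i)
    (hψ₁ : ∀ i j k, ψ i j k = -ψ j i k) (hψ₂ : ∀ i j k, ψ i j k = -ψ i k j)
    (hψm₁ : ∀ i j k, ψm i j k = -ψm j i k) (hψm₂ : ∀ i j k, ψm i j k = -ψm i k j)
    (hψω : ∀ i j a, ∑ k, ψ i j k * ω a k = -ψm i j a) (k : ι) :
    ∑ i, ∑ j, diamond h ω i j * ψ i j k = 0 := by
  have hψm_skew : ∀ i p, ψm i k p = -ψm p k i := fun i p => by
    rw [apply_cyclic_of_alternating hψm₁ hψm₂, hψm₁]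
  simp_rw [sum_diamond_mul_skew h hω (hψ₁ · · k), sum_omega_mul_psi_left hψ₂ hψω,
    sum_sum_mul_eq_zero_of_symm_of_skew hh hψm_skew, mul_zero]

end SU3Contractions

theorem diamond_omega_on_two_forms_general
    (ω : Fin 6 → Fin 6 → ℝ)
    (ψp ψm : Fin 6 → Fin 6 → Fin 6 → ℝ)
    (hω_skew : ∀ i j, ω i j = - ω j i)
    (hω_unit : ∀ i j, ∑ k, ω i k * ω j k = kd6 i j)
    (hψp1 : ∀ i j k, ψp i j k = - ψp j i k)
    (hψp2 : ∀ i j k, ψp i j k = - ψp i k j)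
    (hψm1 : ∀ i j k, ψm i j k = - ψm j i k)
    (hψm2 : ∀ i j k, ψm i j k = - ψm i k j)
    (hψpω : ∀ i j a, ∑ k, ψp i j k * ω a k = - ψm i j a) :
    (∀ i j, ∑ p, (kd6 i p * ω p j + kd6 j p * ω i p) = 2 * ω i j) ∧
    (∀ X : EuclideanSpace ℝ (Fin 6), ∀ i j,
      ∑ p, ((∑ u, X u * ψp u i p) * ω p j + (∑ u, X u * ψp u j p) * ω i p)
        = -2 * ∑ u, (∑ a, X a * ω a u) * ψp u i j) ∧
    (∀ h : Fin 6 → Fin 6 → ℝ, (∀ i j, h i j = h j i) → (∑ i, h i i) = 0 →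
      (∀ i j, ∑ p, h i p * ω p j = ∑ p, ω i p * h p j) →
      (∑ i, ∑ j, (∑ p, (h i p * ω p j + h j p * ω i p)) * ω i j = 0) ∧
      (∀ k, ∑ i, ∑ j, (∑ p, (h i p * ω p j + h j p * ω i p)) * ψp i j k = 0)) := by
  refine ⟨diamond_kronecker ω,
    fun X => diamond_contract_psi X.ofLp hω_skew hψp1 hψp2 hψm1 hψm2 hψpω,
    fun h hsym htr _ => ⟨?_, sum_diamond_mul_psi hsym hω_skew hψp1 hψp2 hψm1 hψm2 hψpω⟩⟩
  exact (sum_diamond_mul_omega h hω_skew hω_unit).trans (by rw [htr, mul_zero])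

theorem diamond_omega_on_two_forms
    (ω : Fin 6 → Fin 6 → ℝ)
    (ψp ψm : Fin 6 → Fin 6 → Fin 6 → ℝ)
    (hω_skew : ∀ i j, ω i j = - ω j i)
    (hω_unit : ∀ i j, ∑ k, ω i k * ω j k = kd6 i j)
    (hψp1 : ∀ i j k, ψp i j k = - ψp j i k)
    (hψp2 : ∀ i j k, ψp i j k = - ψp i k j)
    (hψm1 : ∀ i j k, ψm i j k = - ψm j i k)
    (hψm2 : ∀ i j k, ψm i j k = - ψm i k j)
    (hψpω : ∀ i j a, ∑ k, ψp i j k * ω a k = - ψm i j a)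
    (hψpψp : ∀ i j a b, ∑ k, ψp i j k * ψp a b k =
      kd6 i a * kd6 j b - kd6 i b * kd6 j a - ω i a * ω j b + ω i b * ω j a) :
    (∀ i j, ∑ p, (kd6 i p * ω p j + kd6 j p * ω i p) = 2 * ω i j) ∧
    (∀ X : EuclideanSpace ℝ (Fin 6), ∀ i j,
      ∑ p, ((∑ u, X u * ψp u i p) * ω p j + (∑ u, X u * ψp u j p) * ω i p)
        = -2 * ∑ u, (∑ a, X a * ω a u) * ψp u i j) ∧
    (∀ h : Fin 6 → Fin 6 → ℝ, (∀ i j, h i j = h j i) → (∑ i, h i i) = 0 →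
      (∀ i j, ∑ p, h i p * ω p j = ∑ p, ω i p * h p j) →
      (∑ i, ∑ j, (∑ p, (h i p * ω p j + h j p * ω i p)) * ω i j = 0) ∧
      (∀ k, ∑ i, ∑ j, (∑ p, (h i p * ω p j + h j p * ω i p)) * ψp i j k = 0)) :=
  diamond_omega_on_two_forms_general ω ψp ψm hω_skew hω_unit hψp1 hψp2 hψm1 hψm2 hψpω
end
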